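/- Let (u, ρ) be a smooth solution of the periodic two-component μ-Hunter-Saxton system on [0,∞). Then for every T > 0, (∫₀ᵀ ∫₀¹ ((u(t,x)+γ) u_x(t,x))² dx dt)^{1/2} ≤ (|μ₀| + (√3/6) μ₁ + |γ|) μ₁ √T. -/

import Mathlib

/-!
Integrating the first equation over a period shows that the mean `∫₀¹ u` is conserved, and the
energy `∫₀¹ (u_x² + ρ²)` is conserved as well: after substituting both equations, the integrand
of its time derivative is the `x`-derivative of a periodic function. A `1`-periodic function
differs from its mean by at most `√(1/12)` times the `L²` norm of its derivative (Cauchy–Schwarz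
against the sawtooth kernel `y - x - 1/2` on `[x, x + 1]`). Hence
`|u + γ| ≤ |μ₀| + (√3/6) μ₁ + |γ|` and `∫₀¹ u_x² ≤ μ₁²` for all `t ≥ 0`, and integrating over
`[0, T]` gives the bound.
-/

open MeasureTheory Real Set Filter Function
open scoped ContDiff

section OneVariable

variable {E : Type*} [NormedAddCommGroup E] [NormedSpace ℝ E]

theorem Function.Periodic.intervalIntegral_deriv_eq_zero [CompleteSpace E] {f f' : ℝ → E} {c : ℝ}
    (hf : Periodic f c) (hd : ∀ x, HasDerivAt f (f' x) x) (hf' : Continuous f') :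
    ∫ x in (0:ℝ)..c, f' x = 0 := by
  rw [intervalIntegral.integral_eq_sub_of_hasDerivAt (fun x _ => hd x)
    (hf'.intervalIntegrable 0 c), ← zero_add c, hf 0, sub_self]

theorem Function.Periodic.deriv {f : ℝ → E} {c : ℝ} (hf : Periodic f c) :
    Periodic (deriv f) c := fun x => by
  rw [← deriv_comp_add_const, funext hf]

theorem eq_of_hasDerivAt_eq_zero_on_Ici {g : ℝ → E} {a t : ℝ}
    (hd : ∀ s ∈ Ici a, HasDerivAt g 0 s) (ht : t ∈ Ici a) : g t = g a :=
  constant_of_has_deriv_right_zero (fun s hs => (hd s hs.1).continuousAt.continuousWithinAt)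
    (fun s hs => (hd s hs.1).hasDerivWithinAt) t ⟨ht, le_rfl⟩

theorem ContDiff.hasDerivAt_deriv {g : ℝ → E} (hg : ContDiff ℝ ∞ g) (x : ℝ) :
    HasDerivAt g (deriv g x) x :=
  (hg.differentiable (by decide) x).hasDerivAt

theorem hasDerivAt_intervalIntegral_of_continuous {F F' : ℝ → ℝ → E}
    (hF : Continuous (uncurry F)) (hF' : Continuous (uncurry F'))
    (hd : ∀ s y, HasDerivAt (fun r => F r y) (F' s y) s) (a b t : ℝ) :
    HasDerivAt (fun s => ∫ y in a..b, F s y) (∫ y in a..b, F' t y) t := by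
  obtain ⟨C, hC⟩ := (isCompact_closedBall t 1 |>.prod isCompact_uIcc).exists_bound_of_continuousOn
    hF'.continuousOn
  refine (intervalIntegral.hasDerivAt_integral_of_dominated_loc_of_deriv_le (bound := fun _ => C)
    (Metric.ball_mem_nhds t one_pos) ?_ ?_ ?_ ?_ intervalIntegrable_const ?_).2
  · exact Eventually.of_forall fun s => (hF.comp (Continuous.prodMk_right s)).aestronglyMeasurable
  · exact (hF.comp (Continuous.prodMk_right t)).intervalIntegrable a b
  · exact (hF'.comp (Continuous.prodMk_right t)).aestronglyMeasurable
  · exact Eventually.of_forall fun y hy s hs =>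
      hC (s, y) ⟨Metric.ball_subset_closedBall hs, uIoc_subset_uIcc hy⟩
  · exact Eventually.of_forall fun y _ s _ => hd s y

theorem sq_intervalIntegral_mul_le {g h : ℝ → ℝ} {a b : ℝ} (hab : a ≤ b)
    (hg : Continuous g) (hh : Continuous h) :
    (∫ x in a..b, g x * h x) ^ 2 ≤ (∫ x in a..b, g x ^ 2) * ∫ x in a..b, h x ^ 2 := by
  have hint : ∀ k : ℝ → ℝ, Continuous k → IntervalIntegrable k volume a b :=
    fun k hk => hk.intervalIntegrable a b
  have hquad : ∀ l : ℝ, 0 ≤ (∫ x in a..b, g x ^ 2) * (l * l)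
      + 2 * (∫ x in a..b, g x * h x) * l + ∫ x in a..b, h x ^ 2 := fun l => by
    have hexp : ∫ x in a..b, (l * g x + h x) ^ 2 = (∫ x in a..b, g x ^ 2) * (l * l)
        + 2 * (∫ x in a..b, g x * h x) * l + ∫ x in a..b, h x ^ 2 := by
      have hpoly : (fun x => (l * g x + h x) ^ 2)
          = fun x => l ^ 2 * g x ^ 2 + 2 * l * (g x * h x) + h x ^ 2 := by
        ext x; ring
      rw [hpoly, intervalIntegral.integral_add (hint _ (by fun_prop)) (hint _ (by fun_prop)),
        intervalIntegral.integral_add (hint _ (by fun_prop)) (hint _ (by fun_prop)),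
        intervalIntegral.integral_const_mul, intervalIntegral.integral_const_mul]
      ring
    rw [← hexp]
    exact intervalIntegral.integral_nonneg hab fun x _ => sq_nonneg _
  have := discrim_le_zero hquad
  rw [discrim] at this
  nlinarith

theorem sq_sub_intervalIntegral_le_of_periodic {f : ℝ → ℝ} (hf : Periodic f 1)
    (hf' : ContDiff ℝ 1 f) (x : ℝ) :
    (f x - ∫ y in (0:ℝ)..1, f y) ^ 2 ≤ 1 / 12 * ∫ y in (0:ℝ)..1, deriv f y ^ 2 := by
  have hd : ∀ y, HasDerivAt f (deriv f y) y :=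
    fun y => (hf'.differentiable one_ne_zero y).hasDerivAt
  have hcont : Continuous (deriv f) := hf'.continuous_deriv le_rfl
  -- integrating by parts against the sawtooth kernel y - x - 1/2 over one period
  have hrepr : ∫ y in x..x + 1, (y - (x + 1 / 2)) * deriv f y
      = f x - ∫ y in (0:ℝ)..1, f y := by
    rw [intervalIntegral.integral_mul_deriv_eq_deriv_mul (u := fun y => y - (x + 1 / 2))
      (u' := fun _ => 1) (fun y _ => (hasDerivAt_id y).sub_const _) (fun y _ => hd y)
      intervalIntegrable_const (hcont.intervalIntegrable _ _), hf x]
    simp only [one_mul, hf.intervalIntegral_add_eq x 0, zero_add]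
    ring
  have hkernel : ∫ y in x..x + 1, (y - (x + 1 / 2)) ^ 2 = 1 / 12 := by
    rw [intervalIntegral.integral_comp_sub_right (fun y => y ^ 2), integral_pow]
    ring
  have hperiod : ∫ y in x..x + 1, deriv f y ^ 2 = ∫ y in (0:ℝ)..1, deriv f y ^ 2 := by
    simpa using (hf.deriv.comp (· ^ 2)).intervalIntegral_add_eq x 0
  rw [← hrepr, ← hkernel, ← hperiod]
  exact sq_intervalIntegral_mul_le (by linarith) (by fun_prop) hcont

end OneVariable

section PartialDerivatives

/- Partial derivatives of a function of `(t, x)`, defined through `deriv` so that the iterated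
derivatives in the equations of the system unfold to them definitionally. -/
noncomputable def partialT (F : ℝ → ℝ → ℝ) (t x : ℝ) : ℝ := deriv (fun s => F s x) t

noncomputable def partialX (F : ℝ → ℝ → ℝ) (t x : ℝ) : ℝ := deriv (F t) x

variable {F : ℝ → ℝ → ℝ}

theorem hasDerivAt_partialT (hF : Differentiable ℝ (uncurry F)) (t x : ℝ) :
    HasDerivAt (fun s => F s x) (partialT F t x) t :=
  DifferentiableAt.hasDerivAt (f := fun s => F s x)
    ((hF (t, x)).comp (f := fun s => (s, x)) t
      (differentiableAt_id.prodMk (differentiableAt_const x)))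

theorem hasDerivAt_partialX (hF : Differentiable ℝ (uncurry F)) (t x : ℝ) :
    HasDerivAt (F t) (partialX F t x) x :=
  DifferentiableAt.hasDerivAt (f := F t)
    ((hF (t, x)).comp (f := fun y => (t, y)) x
      ((differentiableAt_const t).prodMk differentiableAt_id))

theorem partialT_eq_fderiv (hF : Differentiable ℝ (uncurry F)) (t x : ℝ) :
    partialT F t x = fderiv ℝ (uncurry F) (t, x) (1, 0) :=
  ((hF (t, x)).hasFDerivAt.comp_hasDerivAt_of_eq t
    ((hasDerivAt_id t).prodMk (hasDerivAt_const t x)) rfl).deriv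

theorem partialX_eq_fderiv (hF : Differentiable ℝ (uncurry F)) (t x : ℝ) :
    partialX F t x = fderiv ℝ (uncurry F) (t, x) (0, 1) :=
  ((hF (t, x)).hasFDerivAt.comp_hasDerivAt_of_eq x
    ((hasDerivAt_const x t).prodMk (hasDerivAt_id x)) rfl).deriv

theorem contDiff_partialT {m n : WithTop ℕ∞} (hF : ContDiff ℝ n (uncurry F)) (hmn : m + 1 ≤ n) :
    ContDiff ℝ m (uncurry (partialT F)) := by
  have hF' : Differentiable ℝ (uncurry F) :=
    (hF.of_le (le_trans le_add_self hmn)).differentiable one_ne_zero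
  have : uncurry (partialT F) = fun p => fderiv ℝ (uncurry F) p (1, 0) :=
    funext fun p => partialT_eq_fderiv hF' p.1 p.2
  rw [this]
  exact (hF.fderiv_right hmn).clm_apply contDiff_const

theorem contDiff_partialX {m n : WithTop ℕ∞} (hF : ContDiff ℝ n (uncurry F)) (hmn : m + 1 ≤ n) :
    ContDiff ℝ m (uncurry (partialX F)) := by
  have hF' : Differentiable ℝ (uncurry F) :=
    (hF.of_le (le_trans le_add_self hmn)).differentiable one_ne_zero
  have : uncurry (partialX F) = fun p => fderiv ℝ (uncurry F) p (0, 1) :=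
    funext fun p => partialX_eq_fderiv hF' p.1 p.2
  rw [this]
  exact (hF.fderiv_right hmn).clm_apply contDiff_const

theorem partialT_partialX (hF : ContDiff ℝ 2 (uncurry F)) (t x : ℝ) :
    partialT (partialX F) t x = partialX (partialT F) t x := by
  have hF' : Differentiable ℝ (uncurry F) := hF.differentiable (by simp)
  have hF'' : Differentiable ℝ (fderiv ℝ (uncurry F)) :=
    (hF.fderiv_right (m := 1) (by norm_num)).differentiable (by simp)
  have hX : uncurry (partialX F) = fun p => fderiv ℝ (uncurry F) p (0, 1) :=
    funext fun p => partialX_eq_fderiv hF' p.1 p.2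
  have hT : uncurry (partialT F) = fun p => fderiv ℝ (uncurry F) p (1, 0) :=
    funext fun p => partialT_eq_fderiv hF' p.1 p.2
  have hXd : Differentiable ℝ (uncurry (partialX F)) := by
    rw [hX]; exact fun p => (hF'' p).clm_apply (differentiableAt_const _)
  have hTd : Differentiable ℝ (uncurry (partialT F)) := by
    rw [hT]; exact fun p => (hF'' p).clm_apply (differentiableAt_const _)
  rw [partialT_eq_fderiv hXd, partialX_eq_fderiv hTd, hX, hT,
    fderiv_clm_apply (hF'' _) (differentiableAt_const _),
    fderiv_clm_apply (hF'' _) (differentiableAt_const _)]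
  simpa using (hF.contDiffAt.isSymmSndFDerivAt (by simp)) (1, 0) (0, 1)

theorem periodic_partialT {c : ℝ} (hF : ∀ t, Periodic (F t) c) (t : ℝ) :
    Periodic (partialT F t) c := fun x => by
  simp only [partialT, hF _ x]

theorem periodic_partialX {c : ℝ} (hF : ∀ t, Periodic (F t) c) (t : ℝ) :
    Periodic (partialX F t) c :=
  (hF t).deriv

theorem ContDiff.uncurry_left {n : WithTop ℕ∞} (t : ℝ) (hF : ContDiff ℝ n (uncurry F)) :
    ContDiff ℝ n (F t) :=
  hF.comp (contDiff_const.prodMk contDiff_id)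

end PartialDerivatives

namespace MuHunterSaxton

/- The right-hand side of the first equation at time `t`, with `μ` the mean of `v = u t`,
`r = ρ t`. -/
noncomputable def rhs (μ γ : ℝ) (v r : ℝ → ℝ) (x : ℝ) : ℝ :=
  2 * μ * deriv v x - 2 * deriv v x * deriv (deriv v) x - v x * deriv (deriv (deriv v)) x
    + r x * deriv r x - γ * deriv (deriv (deriv v)) x

section Flux

variable {v r : ℝ → ℝ}

theorem continuous_rhs (μ γ : ℝ) (hv : ContDiff ℝ ∞ v) (hr : ContDiff ℝ ∞ r) :
    Continuous (rhs μ γ v r) := by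
  have hv1 := (contDiff_infty_iff_deriv.1 hv).2
  have hv2 := (contDiff_infty_iff_deriv.1 hv1).2
  have := hv.continuous; have := hv1.continuous; have := hv2.continuous
  have := (contDiff_infty_iff_deriv.1 hv2).2.continuous
  have := hr.continuous; have := (contDiff_infty_iff_deriv.1 hr).2.continuous
  unfold rhs
  fun_prop

theorem integral_rhs_eq_zero (μ γ : ℝ) (hv : ContDiff ℝ ∞ v) (hr : ContDiff ℝ ∞ r)
    (hvp : Periodic v 1) (hrp : Periodic r 1) :
    ∫ x in (0:ℝ)..1, rhs μ γ v r x = 0 := by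
  have hv1 := (contDiff_infty_iff_deriv.1 hv).2
  have hv2 := (contDiff_infty_iff_deriv.1 hv1).2
  refine Periodic.intervalIntegral_deriv_eq_zero (f := fun x => 2 * μ * v x
    - v x * deriv (deriv v) x - deriv v x ^ 2 / 2 + r x ^ 2 / 2 - γ * deriv (deriv v) x)
    (fun x => by simp only [hvp x, hvp.deriv x, hvp.deriv.deriv x, hrp x]) (fun x => ?_)
    (continuous_rhs μ γ hv hr)
  have hg := (((((hv.hasDerivAt_deriv x).const_mul (2 * μ)).sub
    ((hv.hasDerivAt_deriv x).mul (hv2.hasDerivAt_deriv x))).sub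
    (((hv1.hasDerivAt_deriv x).pow 2).div_const 2)).add
    (((hr.hasDerivAt_deriv x).pow 2).div_const 2)).sub
    ((hv2.hasDerivAt_deriv x).const_mul γ)
  exact hg.congr_deriv (by simp only [rhs]; push_cast; ring)

theorem integral_energy_flux_eq_zero (μ γ : ℝ) {w : ℝ → ℝ} (hv : ContDiff ℝ ∞ v)
    (hr : ContDiff ℝ ∞ r) (hvp : Periodic v 1) (hwp : Periodic w 1) (hrp : Periodic r 1)
    (hw : ∀ x, HasDerivAt w (-rhs μ γ v r x) x) :
    ∫ x in (0:ℝ)..1,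
      (2 * deriv v x * w x + 2 * r x * (deriv (fun y => r y * v y) x + γ * deriv r x)) = 0 := by
  have hv1 := (contDiff_infty_iff_deriv.1 hv).2
  have hv2 := (contDiff_infty_iff_deriv.1 hv1).2
  have hwc : Continuous w := continuous_iff_continuousAt.2 fun x => (hw x).continuousAt
  have hv1c := hv1.continuous
  have hrc := hr.continuous
  have hr1c := (contDiff_infty_iff_deriv.1 hr).2.continuous
  have hrv : ∀ x, deriv (fun y => r y * v y) x = deriv r x * v x + r x * deriv v x :=
    fun x => ((hr.hasDerivAt_deriv x).mul (hv.hasDerivAt_deriv x)).deriv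
  simp_rw [hrv]
  refine Periodic.intervalIntegral_deriv_eq_zero (f := fun x => 2 * (v x * w x
    + μ * v x ^ 2 - v x ^ 2 * deriv (deriv v) x + v x * r x ^ 2
    - γ * (v x * deriv (deriv v) x - deriv v x ^ 2 / 2) + γ * (r x ^ 2 / 2)))
    (fun x => by simp only [hvp x, hvp.deriv x, hvp.deriv.deriv x, hrp x, hwp x])
    (fun x => ?_) (by fun_prop)
  have hg := ((((((hv.hasDerivAt_deriv x).mul (hw x)).add
    (((hv.hasDerivAt_deriv x).pow 2).const_mul μ)).sub
    (((hv.hasDerivAt_deriv x).pow 2).mul (hv2.hasDerivAt_deriv x))).add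
    ((hv.hasDerivAt_deriv x).mul ((hr.hasDerivAt_deriv x).pow 2))).sub
    ((((hv.hasDerivAt_deriv x).mul (hv2.hasDerivAt_deriv x)).sub
      (((hv1.hasDerivAt_deriv x).pow 2).div_const 2)).const_mul γ)).add
    ((((hr.hasDerivAt_deriv x).pow 2).div_const 2).const_mul γ) |>.const_mul 2
  exact hg.congr_deriv (by simp only [rhs, Pi.pow_apply]; push_cast; ring)

end Flux


structure IsSolution (γ : ℝ) (u ρ : ℝ → ℝ → ℝ) : Prop where
  contDiff_u : ContDiff ℝ ∞ (uncurry u)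
  contDiff_ρ : ContDiff ℝ ∞ (uncurry ρ)
  periodic_u : ∀ t, Periodic (u t) 1
  periodic_ρ : ∀ t, Periodic (ρ t) 1
  eq_u : ∀ t x, 0 ≤ t →
    deriv (fun s => ∫ y in (0:ℝ)..1, u s y) t - partialT (partialX (partialX u)) t x
      = rhs (∫ y in (0:ℝ)..1, u t y) γ (u t) (ρ t) x
  eq_ρ : ∀ t x, 0 ≤ t →
    partialT ρ t x = deriv (fun y => ρ t y * u t y) x + γ * deriv (ρ t) x

noncomputable def energy (u ρ : ℝ → ℝ → ℝ) (t : ℝ) : ℝ :=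
  ∫ y in (0:ℝ)..1, (partialX u t y ^ 2 + ρ t y ^ 2)

namespace IsSolution

variable {γ : ℝ} {u ρ : ℝ → ℝ → ℝ}

theorem deriv_mean_eq_zero (hs : IsSolution γ u ρ) {t : ℝ} (ht : 0 ≤ t) :
    deriv (fun s => ∫ y in (0:ℝ)..1, u s y) t = 0 := by
  have hux : ContDiff ℝ ∞ (uncurry (partialX u)) := contDiff_partialX hs.contDiff_u (by simp)
  have hutx : ContDiff ℝ ∞ (uncurry (partialT (partialX u))) := contDiff_partialT hux (by simp)
  have hcomm : ∀ x, partialT (partialX (partialX u)) t x = partialX (partialT (partialX u)) t x :=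
    partialT_partialX (hux.of_le (WithTop.coe_le_coe.2 le_top)) t
  have hutxx_cont : Continuous (partialX (partialT (partialX u)) t) :=
    (contDiff_partialX (m := 0) hutx (by simp)).continuous.uncurry_left t
  have hu : ContDiff ℝ ∞ (u t) := hs.contDiff_u.uncurry_left t
  have hρ : ContDiff ℝ ∞ (ρ t) := hs.contDiff_ρ.uncurry_left t
  -- the time derivative of u_xx integrates to zero as an x-derivative of a periodic function
  have hutxx : ∫ x in (0:ℝ)..1, partialX (partialT (partialX u)) t x = 0 :=
    (periodic_partialT (periodic_partialX hs.periodic_u) t).intervalIntegral_deriv_eq_zero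
      (hasDerivAt_partialX (hutx.differentiable (by decide)) t) hutxx_cont
  have hrhs := integral_rhs_eq_zero (∫ y in (0:ℝ)..1, u t y) γ hu hρ (hs.periodic_u t)
    (hs.periodic_ρ t)
  calc deriv (fun s => ∫ y in (0:ℝ)..1, u s y) t
      = ∫ x in (0:ℝ)..1, deriv (fun s => ∫ y in (0:ℝ)..1, u s y) t := by simp
    _ = ∫ x in (0:ℝ)..1, (partialX (partialT (partialX u)) t x
        + rhs (∫ y in (0:ℝ)..1, u t y) γ (u t) (ρ t) x) :=
      intervalIntegral.integral_congr fun x _ => by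
        rw [← hcomm, ← hs.eq_u t x ht, add_sub_cancel]
    _ = 0 := by
      rw [intervalIntegral.integral_add (hutxx_cont.intervalIntegrable 0 1)
        ((continuous_rhs _ γ hu hρ).intervalIntegrable 0 1), hutxx, hrhs, add_zero]

theorem mean_eq_initial (hs : IsSolution γ u ρ) {t : ℝ} (ht : 0 ≤ t) :
    ∫ y in (0:ℝ)..1, u t y = ∫ y in (0:ℝ)..1, u 0 y := by
  have hu := hs.contDiff_u
  have hd : ∀ s, HasDerivAt (fun s => ∫ y in (0:ℝ)..1, u s y) (∫ y in (0:ℝ)..1, partialT u s y) s :=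
    hasDerivAt_intervalIntegral_of_continuous (F := u) hu.continuous
      (contDiff_partialT (m := 0) hu (by simp)).continuous
      (hasDerivAt_partialT (hu.differentiable (by decide))) 0 1
  refine eq_of_hasDerivAt_eq_zero_on_Ici (g := fun s => ∫ y in (0:ℝ)..1, u s y)
    (fun s hs0 => ?_) ht
  have h := (hd s).differentiableAt.hasDerivAt
  rwa [hs.deriv_mean_eq_zero hs0] at h

theorem energy_eq_initial (hs : IsSolution γ u ρ) {t : ℝ} (ht : 0 ≤ t) :
    energy u ρ t = energy u ρ 0 := by
  have hux : ContDiff ℝ ∞ (uncurry (partialX u)) := contDiff_partialX hs.contDiff_u (by simp)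
  have hutx : ContDiff ℝ ∞ (uncurry (partialT (partialX u))) := contDiff_partialT hux (by simp)
  have hρt : ContDiff ℝ ∞ (uncurry (partialT ρ)) := contDiff_partialT hs.contDiff_ρ (by simp)
  have := hux.continuous; have := hutx.continuous; have := hρt.continuous
  have := hs.contDiff_ρ.continuous
  have hd : ∀ s, HasDerivAt (energy u ρ) (∫ y in (0:ℝ)..1,
      (2 * partialX u s y * partialT (partialX u) s y + 2 * ρ s y * partialT ρ s y)) s :=
    fun s => hasDerivAt_intervalIntegral_of_continuous
      (F := fun s y => partialX u s y ^ 2 + ρ s y ^ 2)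
      (F' := fun s y => 2 * partialX u s y * partialT (partialX u) s y
        + 2 * ρ s y * partialT ρ s y)
      (by fun_prop) (by fun_prop)
      (fun s y => (((hasDerivAt_partialT (hux.differentiable (by decide)) s y).pow 2).add
          ((hasDerivAt_partialT (hs.contDiff_ρ.differentiable (by decide)) s y).pow 2)).congr_deriv
        (by push_cast; ring)) 0 1 s
  refine eq_of_hasDerivAt_eq_zero_on_Ici (fun s hs0 => ?_) ht
  -- w = u_xt satisfies w_x = u_txx = -rhs, since the mean of u is constant
  have hw : ∀ x, HasDerivAt (partialT (partialX u) s)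
      (-rhs (∫ y in (0:ℝ)..1, u s y) γ (u s) (ρ s) x) x := fun x => by
    convert hasDerivAt_partialX (hutx.differentiable (by decide)) s x using 1
    rw [← partialT_partialX (hux.of_le (WithTop.coe_le_coe.2 le_top)), ← hs.eq_u s x hs0,
      hs.deriv_mean_eq_zero hs0, zero_sub, neg_neg]
  have hflux : ∫ y in (0:ℝ)..1,
      (2 * partialX u s y * partialT (partialX u) s y + 2 * ρ s y * partialT ρ s y) = 0 := calc
    _ = ∫ y in (0:ℝ)..1, (2 * deriv (u s) y * partialT (partialX u) s y
        + 2 * ρ s y * (deriv (fun y => ρ s y * u s y) y + γ * deriv (ρ s) y)) :=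
      intervalIntegral.integral_congr fun y _ => by rw [hs.eq_ρ s y hs0]; rfl
    _ = 0 := integral_energy_flux_eq_zero _ γ (hs.contDiff_u.uncurry_left s)
      (hs.contDiff_ρ.uncurry_left s) (hs.periodic_u s)
      (periodic_partialT (periodic_partialX hs.periodic_u) s) (hs.periodic_ρ s) hw
  simpa only [hflux] using hd s

theorem integral_sq_partialX_le (hs : IsSolution γ u ρ) {t : ℝ} (ht : 0 ≤ t) :
    ∫ y in (0:ℝ)..1, partialX u t y ^ 2 ≤ energy u ρ 0 := by
  have hux := (contDiff_partialX (m := 0) hs.contDiff_u (by simp)).continuous.uncurry_left t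
  have hρ := hs.contDiff_ρ.continuous.uncurry_left t
  rw [← hs.energy_eq_initial ht]
  exact intervalIntegral.integral_mono_on zero_le_one
    (Continuous.intervalIntegrable (by fun_prop) _ _)
    (Continuous.intervalIntegrable (by fun_prop) _ _)
    fun y _ => le_add_of_nonneg_right (sq_nonneg _)

theorem abs_sub_mean_le (hs : IsSolution γ u ρ) {t : ℝ} (ht : 0 ≤ t) (x : ℝ) :
    |u t x - ∫ y in (0:ℝ)..1, u 0 y| ≤ √3 / 6 * √(energy u ρ 0) := by
  have hwirt := sq_sub_intervalIntegral_le_of_periodic (hs.periodic_u t)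
    ((hs.contDiff_u.uncurry_left t).of_le (by simp)) x
  have hsq : (1 / 12 : ℝ) = (√3 / 6) ^ 2 := by
    rw [div_pow, sq_sqrt zero_le_three]; norm_num
  rw [← hs.mean_eq_initial ht]
  calc _ ≤ √(1 / 12 * energy u ρ 0) :=
        abs_le_sqrt (hwirt.trans (by gcongr; exact hs.integral_sq_partialX_le ht))
    _ = √3 / 6 * √(energy u ρ 0) := by
        rw [sqrt_mul (by norm_num), hsq, sqrt_sq (by positivity)]

theorem integral_sq_le (hs : IsSolution γ u ρ) {t : ℝ} (ht : 0 ≤ t) :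
    ∫ x in (0:ℝ)..1, ((u t x + γ) * partialX u t x) ^ 2
      ≤ ((|∫ y in (0:ℝ)..1, u 0 y| + √3 / 6 * √(energy u ρ 0) + |γ|) * √(energy u ρ 0)) ^ 2 := by
  set C := |∫ y in (0:ℝ)..1, u 0 y| + √3 / 6 * √(energy u ρ 0) + |γ| with hC_def
  have hC : ∀ x, |u t x + γ| ≤ C := fun x => calc
    _ = |(u t x - ∫ y in (0:ℝ)..1, u 0 y) + (∫ y in (0:ℝ)..1, u 0 y) + γ| := by ring_nf
    _ ≤ |u t x - ∫ y in (0:ℝ)..1, u 0 y| + |∫ y in (0:ℝ)..1, u 0 y| + |γ| := abs_add_three _ _ _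
    _ ≤ C := by linarith [hs.abs_sub_mean_le ht x, hC_def]
  have hC0 : 0 ≤ C := (abs_nonneg _).trans (hC 0)
  have hE0 : 0 ≤ energy u ρ 0 :=
    intervalIntegral.integral_nonneg zero_le_one fun y _ => by positivity
  have hux := (contDiff_partialX (m := 0) hs.contDiff_u (by simp)).continuous.uncurry_left t
  have hu := hs.contDiff_u.continuous.uncurry_left t
  calc _ ≤ ∫ x in (0:ℝ)..1, C ^ 2 * partialX u t x ^ 2 :=
        intervalIntegral.integral_mono_on zero_le_one
          (Continuous.intervalIntegrable (by fun_prop) _ _)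
          (Continuous.intervalIntegrable (by fun_prop) _ _) fun x _ => by
          rw [mul_pow]
          exact mul_le_mul_of_nonneg_right (sq_le_sq.2 ((hC x).trans (le_abs_self C)))
            (sq_nonneg _)
    _ = C ^ 2 * ∫ x in (0:ℝ)..1, partialX u t x ^ 2 := intervalIntegral.integral_const_mul _ _
    _ ≤ C ^ 2 * energy u ρ 0 := by gcongr; exact hs.integral_sq_partialX_le ht
    _ = (C * √(energy u ρ 0)) ^ 2 := by rw [mul_pow, sq_sqrt hE0]

theorem continuous_integral_sq (hs : IsSolution γ u ρ) :
    Continuous fun t => ∫ x in (0:ℝ)..1, ((u t x + γ) * partialX u t x) ^ 2 := by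
  have hux := (contDiff_partialX (m := 0) hs.contDiff_u (by simp)).continuous
  have hu := hs.contDiff_u.continuous
  exact intervalIntegral.continuous_parametric_intervalIntegral_of_continuous' (by fun_prop) 0 1

end IsSolution

end MuHunterSaxton

open MuHunterSaxton

theorem stmt_16
    (γ : ℝ) (u ρ : ℝ → ℝ → ℝ) (μ₀ μ₁ : ℝ)
    (hu : ContDiff ℝ (⊤ : ℕ∞) (Function.uncurry u))
    (hρ : ContDiff ℝ (⊤ : ℕ∞) (Function.uncurry ρ))
    (huper : ∀ t x : ℝ, u t (x + 1) = u t x)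
    (hρper : ∀ t x : ℝ, ρ t (x + 1) = ρ t x)
    (heq1 : ∀ t x : ℝ, 0 ≤ t →
      deriv (fun s => ∫ y in (0:ℝ)..1, u s y) t
        - deriv (fun s => deriv (deriv (u s)) x) t
      = 2 * (∫ y in (0:ℝ)..1, u t y) * deriv (u t) x
        - 2 * deriv (u t) x * deriv (deriv (u t)) x
        - u t x * deriv (deriv (deriv (u t))) x
        + ρ t x * deriv (ρ t) x
        - γ * deriv (deriv (deriv (u t))) x)
    (heq2 : ∀ t x : ℝ, 0 ≤ t →
      deriv (fun s => ρ s x) t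
      = deriv (fun y => ρ t y * u t y) x + γ * deriv (ρ t) x)
    (hμ₀ : μ₀ = ∫ y in (0:ℝ)..1, u 0 y)
    (hμ₁ : μ₁ = Real.sqrt (∫ y in (0:ℝ)..1, ((deriv (u 0) y) ^ 2 + (ρ 0 y) ^ 2)))
    : ∀ T : ℝ, 0 < T →
      Real.sqrt (∫ t in (0:ℝ)..T, ∫ x in (0:ℝ)..1, ((u t x + γ) * deriv (u t) x) ^ 2)
      ≤ (|μ₀| + Real.sqrt 3 / 6 * μ₁ + |γ|) * μ₁ * Real.sqrt T := by
  intro T hT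
  have hs : IsSolution γ u ρ := ⟨hu, hρ, huper, hρper, heq1, heq2⟩
  have hμ₁' : μ₁ = √(energy u ρ 0) := hμ₁
  subst hμ₀ hμ₁'
  calc _ ≤ √(∫ _ in (0:ℝ)..T,
          ((|∫ y in (0:ℝ)..1, u 0 y| + √3 / 6 * √(energy u ρ 0) + |γ|) * √(energy u ρ 0)) ^ 2) :=
        sqrt_le_sqrt (intervalIntegral.integral_mono_on hT.le
          (hs.continuous_integral_sq.intervalIntegrable _ _) intervalIntegrable_const
          fun t ht => hs.integral_sq_le ht.1)
    _ = _ := by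
        rw [intervalIntegral.integral_const, smul_eq_mul, sub_zero, mul_comm, sqrt_mul' _ hT.le,
          sqrt_sq (by positivity)]
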